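/- arXiv:1106.4917 — 5 statements merged into one kernel-verified Lean document; each statement's English description precedes it below -/
import Mathlib

section
/- Let d, a, b be integers, d ≥ 1, with gcd(d, a, b) = 1. Write (d,a) = gcd(d,a) and (d,b) = gcd(d,b). Then the map [(x,y)] ↦ [(x^{(d,b)}, y^{(d,a)})] gives a well-defined bijection from X(d; a, b) to X(d/((d,a)(d,b)); a/(d,a), b/(d,b)). -/
/-- Orbit relation on ℂ² for the cyclic quotient space `X(d; a, b)`:
`ξ · (x,y) = (ξ^a x, ξ^b y)` for `ξ` a `d`-th root of unity. -/
def XRel (d a b : ℕ) (p q : ℂ × ℂ) : Prop :=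
  ∃ ξ : ℂ, ξ ^ d = 1 ∧ q = (ξ ^ a * p.1, ξ ^ b * p.2)

lemma xrel_equivalence {d : ℕ} (hd : d ≠ 0) (a b : ℕ) : Equivalence (XRel d a b) := by
  constructor
  · intro p
    exact ⟨1, one_pow d, by simp⟩
  · rintro ⟨p1, p2⟩ q ⟨ξ, hξ, rfl⟩
    have hξ0 : ξ ≠ 0 := fun h0 => by simp [h0, zero_pow hd] at hξ
    refine ⟨ξ⁻¹, by rw [inv_pow, hξ, inv_one], ?_⟩
    simp only [Prod.mk.injEq]
    constructor <;>
    · symm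
      rw [← mul_assoc, ← mul_pow, inv_mul_cancel₀ hξ0, one_pow, one_mul]
  · rintro p q r ⟨ξ, hξ, rfl⟩ ⟨ζ, hζ, rfl⟩
    refine ⟨ζ * ξ, by rw [mul_pow, hξ, hζ, one_mul], ?_⟩
    simp only [Prod.mk.injEq, mul_pow]
    constructor <;> ring

/-- Solve `θ^n = 1`, `θ^c = δ` for `δ` an `n`-th root of unity, when `gcd(c,n)=1`. -/
lemma exists_theta {c n : ℕ} (hn : n ≠ 0) (hc : Nat.Coprime c n) (δ : ℂ) (hδ : δ ^ n = 1) :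
    ∃ θ : ℂ, θ ^ n = 1 ∧ θ ^ c = δ := by
  have hδ0 : δ ≠ 0 := fun h0 => by simp [h0, zero_pow hn] at hδ
  obtain ⟨u, v, huv⟩ := Nat.isCoprime_iff_coprime.mpr hc
  have hδn : δ ^ (n : ℤ) = 1 := by rw [zpow_natCast, hδ]
  refine ⟨δ ^ u, ?_, ?_⟩
  · rw [← zpow_natCast (δ ^ u) n, ← zpow_mul, mul_comm, zpow_mul, hδn, one_zpow]
  · rw [← zpow_natCast (δ ^ u) c, ← zpow_mul]
    have : u * (c : ℤ) = 1 - v * n := by linarith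
    rw [this, zpow_sub₀ hδ0, zpow_one, mul_comm, zpow_mul, hδn, one_zpow, div_one]

/-- for `gcd(d,a,b) = 1`, the map `[(x,y)] ↦ [(x^{(d,b)}, y^{(d,a)})]`
is a well-defined bijection `X(d;a,b) → X(d/((d,a)(d,b)); a/(d,a), b/(d,b))`. -/
theorem stmt_2 (d a b : ℕ) (hd : 1 ≤ d) (h : Nat.gcd d (Nat.gcd a b) = 1) :
    ∃ F : Quot (XRel d a b) →
        Quot (XRel (d / (Nat.gcd d a * Nat.gcd d b)) (a / Nat.gcd d a) (b / Nat.gcd d b)),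
      Function.Bijective F ∧
      ∀ x y : ℂ, F (Quot.mk _ (x, y)) = Quot.mk _ (x ^ Nat.gcd d b, y ^ Nat.gcd d a) := by
  set da := Nat.gcd d a with hda_def
  set db := Nat.gcd d b with hdb_def
  set a' := a / da with ha'_def
  set b' := b / db with hb'_def
  set d' := d / (da * db) with hd'_def
  have hd0 : d ≠ 0 := by omega
  have hda0 : da ≠ 0 := fun h0 => hd0 (by simpa using Nat.eq_zero_of_gcd_eq_zero_left h0)
  have hdb0 : db ≠ 0 := fun h0 => hd0 (by simpa using Nat.eq_zero_of_gcd_eq_zero_left h0)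
  have cop : Nat.Coprime da db := by
    have : Nat.gcd da db ∣ Nat.gcd d (Nat.gcd a b) :=
      Nat.dvd_gcd ((Nat.gcd_dvd_left da db).trans (Nat.gcd_dvd_left d a))
        (Nat.dvd_gcd ((Nat.gcd_dvd_left da db).trans (Nat.gcd_dvd_right d a))
          ((Nat.gcd_dvd_right da db).trans (Nat.gcd_dvd_right d b)))
    exact Nat.dvd_one.mp (h ▸ this)
  have hdvd : da * db ∣ d :=
    cop.mul_dvd_of_dvd_of_dvd (Nat.gcd_dvd_left d a) (Nat.gcd_dvd_left d b)
  have hdd : d' * (da * db) = d := Nat.div_mul_cancel hdvd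
  have hd'0 : d' ≠ 0 := fun h0 => hd0 (by rw [← hdd, h0, zero_mul])
  have haa : da * a' = a := Nat.mul_div_cancel' (Nat.gcd_dvd_right d a)
  have hbb : db * b' = b := Nat.mul_div_cancel' (Nat.gcd_dvd_right d b)
  have cop_a_db : Nat.Coprime a db := by
    have : Nat.gcd a db ∣ Nat.gcd d (Nat.gcd a b) :=
      Nat.dvd_gcd ((Nat.gcd_dvd_right a db).trans (Nat.gcd_dvd_left d b))
        (Nat.dvd_gcd (Nat.gcd_dvd_left a db)
          ((Nat.gcd_dvd_right a db).trans (Nat.gcd_dvd_right d b)))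
    exact Nat.dvd_one.mp (h ▸ this)
  have cop_b_da : Nat.Coprime b da := by
    have : Nat.gcd b da ∣ Nat.gcd d (Nat.gcd a b) :=
      Nat.dvd_gcd ((Nat.gcd_dvd_right b da).trans (Nat.gcd_dvd_left d a))
        (Nat.dvd_gcd ((Nat.gcd_dvd_right b da).trans (Nat.gcd_dvd_right d a))
          (Nat.gcd_dvd_left b da))
    exact Nat.dvd_one.mp (h ▸ this)
  have equiv' := xrel_equivalence hd'0 a' b'
  -- well-definedness
  have wd : ∀ p q : ℂ × ℂ, XRel d a b p q →
      Quot.mk (XRel d' a' b') (p.1 ^ db, p.2 ^ da) = Quot.mk _ (q.1 ^ db, q.2 ^ da) := by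
    rintro p q ⟨ξ, hξ, rfl⟩
    apply Quot.sound
    refine ⟨ξ ^ (da * db), ?_, ?_⟩
    · rw [← pow_mul, mul_comm, hdd, hξ]
    · simp only [Prod.mk.injEq, ← pow_mul, mul_pow]
      constructor
      · congr 2
        rw [← haa]; ring
      · congr 2
        rw [← hbb]; ring
  refine ⟨Quot.lift (fun p => Quot.mk (XRel d' a' b') (p.1 ^ db, p.2 ^ da)) wd,
    ⟨?_, ?_⟩, fun x y => rfl⟩
  · -- injective
    intro p q hpq
    induction p using Quot.ind with | _ p =>
    induction q using Quot.ind with | _ q =>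
    obtain ⟨x, y⟩ := p
    obtain ⟨x', y'⟩ := q
    simp only [Quot.lift_mk] at hpq
    rw [Quot.eq, equiv'.eqvGen_iff] at hpq
    obtain ⟨η, hη, hq⟩ := hpq
    simp only [Prod.mk.injEq] at hq
    obtain ⟨hx, hy⟩ := hq
    have hη0 : η ≠ 0 := fun h0 => by simp [h0, zero_pow hd'0] at hη
    obtain ⟨ω, hω⟩ := IsAlgClosed.exists_pow_nat_eq (k := ℂ) η
      (n := da * db) (Nat.pos_of_ne_zero (mul_ne_zero hda0 hdb0))
    have hωd : ω ^ d = 1 := by rw [← hdd, mul_comm, pow_mul, hω, hη]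
    have hω0 : ω ≠ 0 := fun h0 => by simp [h0, zero_pow hd0] at hωd
    have hωa : ω ^ (a * db) = η ^ a' := by
      rw [← hω, ← pow_mul]; congr 1; rw [← haa]; ring
    have hωb : ω ^ (b * da) = η ^ b' := by
      rw [← hω, ← pow_mul]; congr 1; rw [← hbb]; ring
    -- produce ε with ε^db = 1 and x' = ε * (ω^a * x)
    have hεex : ∃ ε : ℂ, ε ^ db = 1 ∧ x' = ε * (ω ^ a * x) := by
      by_cases hx0 : x = 0
      · refine ⟨1, one_pow db, ?_⟩
        have : x' ^ db = 0 := by rw [hx, hx0, zero_pow hdb0, mul_zero]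
        rw [pow_eq_zero_iff hdb0] at this
        simp [this, hx0]
      · refine ⟨x' / (ω ^ a * x), ?_, ?_⟩
        · rw [div_pow, hx, mul_pow, ← pow_mul, hωa]
          field_simp
        · rw [div_mul_cancel₀]
          exact mul_ne_zero (pow_ne_zero a hω0) hx0
    have hδex : ∃ δ : ℂ, δ ^ da = 1 ∧ y' = δ * (ω ^ b * y) := by
      by_cases hy0 : y = 0
      · refine ⟨1, one_pow da, ?_⟩
        have : y' ^ da = 0 := by rw [hy, hy0, zero_pow hda0, mul_zero]
        rw [pow_eq_zero_iff hda0] at this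
        simp [this, hy0]
      · refine ⟨y' / (ω ^ b * y), ?_, ?_⟩
        · rw [div_pow, hy, mul_pow, ← pow_mul, hωb]
          field_simp
        · rw [div_mul_cancel₀]
          exact mul_ne_zero (pow_ne_zero b hω0) hy0
    obtain ⟨ε, hε, hxε⟩ := hεex
    obtain ⟨δ, hδ, hyδ⟩ := hδex
    obtain ⟨θ₂, hθ₂n, hθ₂c⟩ := exists_theta hdb0 cop_a_db ε hε
    obtain ⟨θ₁, hθ₁n, hθ₁c⟩ := exists_theta hda0 cop_b_da δ hδ
    apply Quot.sound
    refine ⟨ω * θ₁ * θ₂, ?_, ?_⟩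
    · have h1 : θ₁ ^ d = 1 := by
        rw [← Nat.mul_div_cancel' (Nat.gcd_dvd_left d a), pow_mul, hθ₁n, one_pow]
      have h2 : θ₂ ^ d = 1 := by
        rw [← Nat.mul_div_cancel' (Nat.gcd_dvd_left d b), pow_mul, hθ₂n, one_pow]
      rw [mul_pow, mul_pow, hωd, h1, h2]; ring
    · have hθ₁a : θ₁ ^ a = 1 := by rw [← haa, pow_mul, hθ₁n, one_pow]
      have hθ₂b : θ₂ ^ b = 1 := by rw [← hbb, pow_mul, hθ₂n, one_pow]
      simp only [Prod.mk.injEq, mul_pow]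
      constructor
      · rw [hθ₁a, hθ₂c, hxε]; ring
      · rw [hθ₂b, hθ₁c, hyδ]; ring
  · -- surjective
    intro q
    induction q using Quot.ind with | _ q =>
    obtain ⟨u, v⟩ := q
    obtain ⟨x, hxu⟩ := IsAlgClosed.exists_pow_nat_eq (k := ℂ) u (Nat.pos_of_ne_zero hdb0)
    obtain ⟨y, hyv⟩ := IsAlgClosed.exists_pow_nat_eq (k := ℂ) v (Nat.pos_of_ne_zero hda0)
    exact ⟨Quot.mk _ (x, y), by simp [hxu, hyv]⟩
end

section
/- Let q₀, …, q_n be positive integers with gcd(q₀,…,q_n) = 1. For each i let d_i := gcd(q₀,…,q̂_i,…,q_n) (the gcd of all weights except q_i), let e_i := d₀⋯d̂_i⋯d_n, and p_i := q_i/e_i. Then the p_i are positive integers, and the map [x₀:…:x_n] ↦ [x₀^{d₀}:…:x_n^{d_n}] induces a well-defined bijection from the weighted projective space ℙⁿ(q₀,…,q_n) to ℙⁿ(p₀,…,p_n). -/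
/-- The ℂ*-orbit relation on `ℂ^{n+1} ∖ {0}` defining the weighted projective
space `ℙⁿ(q₀,…,q_n)`: `t·x = (t^{q i} * x i)_i`. -/
def wprojRel (n : ℕ) (q : Fin n → ℕ) (x y : {v : Fin n → ℂ // v ≠ 0}) : Prop :=
  ∃ t : ℂ, t ≠ 0 ∧ ∀ i, y.1 i = t ^ q i * x.1 i

private lemma wprojRel_equiv (n : ℕ) (q : Fin n → ℕ) : Equivalence (wprojRel n q) := by
  refine ⟨fun x => ⟨1, one_ne_zero, fun i => by simp⟩, ?_, ?_⟩
  · rintro x y ⟨t, ht, h⟩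
    refine ⟨t⁻¹, inv_ne_zero ht, fun i => ?_⟩
    rw [h i, ← mul_assoc, ← mul_pow, inv_mul_cancel₀ ht, one_pow, one_mul]
  · rintro x y z ⟨t, ht, h1⟩ ⟨s, hs, h2⟩
    refine ⟨s * t, mul_ne_zero hs ht, fun i => ?_⟩
    rw [h2 i, h1 i, ← mul_assoc, ← mul_pow]

private lemma nat_prod_dvd {ι : Type*} (s : Finset ι) (f : ι → ℕ) (m : ℕ)
    (hc : ∀ i ∈ s, ∀ j ∈ s, i ≠ j → Nat.Coprime (f i) (f j))
    (hdvd : ∀ i ∈ s, f i ∣ m) : s.prod f ∣ m := by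
  induction s using Finset.cons_induction with
  | empty => simp
  | cons a s ha ih =>
    rw [Finset.prod_cons]
    refine Nat.Coprime.mul_dvd_of_dvd_of_dvd ?_ (hdvd a (Finset.mem_cons_self a s)) ?_
    · exact Nat.Coprime.prod_right fun j hj =>
        hc a (Finset.mem_cons_self a s) j (Finset.mem_cons_of_mem hj)
          (fun h => ha (h ▸ hj))
    · exact ih (fun i hi j hj hij => hc i (Finset.mem_cons_of_mem hi) j
        (Finset.mem_cons_of_mem hj) hij) (fun i hi => hdvd i (Finset.mem_cons_of_mem hi))

private lemma stmt4_aux (n : ℕ) (q : Fin (n + 1) → ℕ) (hq : ∀ i, 0 < q i)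
    (hgcd : Finset.univ.gcd q = 1)
    (d e p : Fin (n + 1) → ℕ)
    (hd : ∀ i, d i = (Finset.univ.erase i).gcd q)
    (he : ∀ i, e i = (Finset.univ.erase i).prod d)
    (hp : ∀ i, p i = q i / e i) :
    (∀ i, e i ∣ q i ∧ 0 < p i) ∧
    ∃ F : Quot (wprojRel (n + 1) q) → Quot (wprojRel (n + 1) p),
      Function.Bijective F ∧
      ∀ (x : {v : Fin (n + 1) → ℂ // v ≠ 0})
        (h : (fun i => x.1 i ^ d i) ≠ (0 : Fin (n + 1) → ℂ)),
        F (Quot.mk _ x) = Quot.mk _ ⟨fun i => x.1 i ^ d i, h⟩ := by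
  classical
  have hdvd : ∀ j i : Fin (n+1), i ≠ j → d j ∣ q i := fun j i hij => by
    rw [hd]; exact Finset.gcd_dvd (Finset.mem_erase.mpr ⟨hij, Finset.mem_univ i⟩)
  have hdpos : ∀ i j : Fin (n+1), i ≠ j → 0 < d j := by
    intro i j hij
    rcases Nat.eq_zero_or_pos (d j) with h0 | h
    · exfalso
      have := Finset.gcd_eq_zero_iff.mp ((hd j) ▸ h0) i
        (Finset.mem_erase.mpr ⟨hij, Finset.mem_univ i⟩)
      exact (hq i).ne' this
    · exact h
  have hcop : ∀ i j : Fin (n+1), i ≠ j → Nat.Coprime (d i) (d j) := by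
    intro i j hij
    have hdv : Nat.gcd (d i) (d j) ∣ Finset.univ.gcd q := by
      apply Finset.dvd_gcd
      intro k _
      by_cases hk : k = i
      · exact dvd_trans (Nat.gcd_dvd_right _ _) (hdvd j k (hk ▸ hij))
      · exact dvd_trans (Nat.gcd_dvd_left _ _) (hdvd i k hk)
    rw [hgcd] at hdv
    exact Nat.dvd_one.mp hdv
  have hediv : ∀ i, e i ∣ q i := by
    intro i
    rw [he]
    refine nat_prod_dvd _ _ _ (fun a _ b _ hab => hcop a b hab) (fun a ha => ?_)
    exact hdvd a i (Ne.symm (Finset.mem_erase.mp ha).1)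
  have hepos : ∀ i, 0 < e i := by
    intro i; rw [he]
    exact Finset.prod_pos fun j hj => hdpos i j (Ne.symm (Finset.mem_erase.mp hj).1)
  have hppos : ∀ i, 0 < p i := fun i => by
    rw [hp]; exact Nat.div_pos (Nat.le_of_dvd (hq i) (hediv i)) (hepos i)
  have hqpe : ∀ i, q i = p i * e i := fun i => by
    rw [hp, Nat.div_mul_cancel (hediv i)]
  set D : ℕ := Finset.univ.prod d with hD
  have hdeD : ∀ i, d i * e i = D := fun i => by
    rw [he, hD, Finset.mul_prod_erase Finset.univ d (Finset.mem_univ i)]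
  have hkey : ∀ i, q i * d i = p i * D := fun i => by
    rw [hqpe i, ← hdeD i]; ring
  have hcqd : ∀ i, Nat.Coprime (q i) (d i) := by
    intro i
    have huniv : (Finset.univ : Finset (Fin (n+1))) = insert i (Finset.univ.erase i) :=
      (Finset.insert_erase (Finset.mem_univ i)).symm
    rw [huniv, Finset.gcd_insert] at hgcd
    rw [hd]
    exact hgcd
  -- the map on representatives
  have fne : ∀ x : {v : Fin (n+1) → ℂ // v ≠ 0}, (fun i => x.1 i ^ d i) ≠ (0 : Fin (n+1) → ℂ) := by
    intro x hx0
    obtain ⟨j, hj⟩ := Function.ne_iff.mp x.2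
    have : x.1 j ^ d j = 0 := congrFun hx0 j
    exact hj (pow_eq_zero_iff'.mp this).1
  set f : {v : Fin (n+1) → ℂ // v ≠ 0} → {v : Fin (n+1) → ℂ // v ≠ 0} :=
    fun x => ⟨fun i => x.1 i ^ d i, fne x⟩ with hf
  have hwd : ∀ x y, wprojRel (n+1) q x y → wprojRel (n+1) p (f x) (f y) := by
    rintro x y ⟨t, ht, hxy⟩
    refine ⟨t ^ D, pow_ne_zero _ ht, fun i => ?_⟩
    show y.1 i ^ d i = (t ^ D) ^ p i * x.1 i ^ d i
    rw [hxy i, mul_pow, ← pow_mul, ← pow_mul, mul_comm D (p i), hkey i]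
  set F : Quot (wprojRel (n+1) q) → Quot (wprojRel (n+1) p) :=
    Quot.lift (fun x => Quot.mk _ (f x)) (fun x y h => Quot.sound (hwd x y h)) with hF
  have hinj : Function.Injective F := by
    intro a b
    induction a using Quot.ind with | _ x => ?_
    induction b using Quot.ind with | _ y => ?_
    intro hxy
    have hrel : wprojRel (n+1) p (f x) (f y) :=
      ((wprojRel_equiv (n+1) p).eqvGen_iff).mp (Quot.eq.mp hxy)
    obtain ⟨s, hs, hsy⟩ := hrel
    apply Quot.sound
    by_cases hall : ∀ i, 0 < d i
    · have hDpos : 0 < D := Finset.prod_pos fun j _ => hall j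
      obtain ⟨t₀, ht₀⟩ := IsAlgClosed.exists_pow_nat_eq (k := ℂ) s hDpos
      have ht₀0 : t₀ ≠ 0 := by
        intro h0; apply hs; rw [← ht₀, h0, zero_pow hDpos.ne']
      set z : Fin (n+1) → ℂ := fun i => t₀ ^ q i * x.1 i with hz
      have hzy : ∀ i, y.1 i ^ d i = z i ^ d i := by
        intro i
        calc y.1 i ^ d i = s ^ p i * x.1 i ^ d i := hsy i
          _ = z i ^ d i := by
            rw [hz]
            show s ^ p i * x.1 i ^ d i = (t₀ ^ q i * x.1 i) ^ d i
            rw [mul_pow, ← pow_mul, ← ht₀, ← pow_mul, mul_comm D (p i), ← hkey i]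
      set ζ : Fin (n+1) → ℂ := fun i => if z i = 0 then 1 else y.1 i / z i with hζ
      have hζd : ∀ i, ζ i ^ d i = 1 := by
        intro i
        rw [hζ]; dsimp only
        split_ifs with h0
        · exact one_pow _
        · rw [div_pow, hzy i, div_self (pow_ne_zero _ h0)]
      have hζz : ∀ i, y.1 i = ζ i * z i := by
        intro i
        rw [hζ]; dsimp only
        split_ifs with h0
        · rw [one_mul, h0]
          have hy0 : y.1 i ^ d i = 0 := by rw [hzy i, h0, zero_pow (hall i).ne']
          exact (pow_eq_zero_iff (hall i).ne').mp hy0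
        · rw [div_mul_cancel₀ _ h0]
      have hζ0 : ∀ i, ζ i ≠ 0 := by
        intro i h0
        have h1 := hζd i
        rw [h0, zero_pow (hall i).ne'] at h1
        exact zero_ne_one h1
      set A : Fin (n+1) → ℤ := fun i => Nat.gcdA (q i) (d i) with hA
      set B : Fin (n+1) → ℤ := fun i => Nat.gcdB (q i) (d i) with hB
      have hbez : ∀ i, (q i : ℤ) * A i = 1 - (d i) * B i := by
        intro i
        have hb := Nat.gcd_eq_gcd_ab (q i) (d i)
        rw [hcqd i] at hb
        rw [hA, hB]
        push_cast at hb ⊢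
        linarith
      set ω : Fin (n+1) → ℂ := fun i => ζ i ^ A i with hω
      have hω0 : ∀ i, ω i ≠ 0 := fun i => zpow_ne_zero _ (hζ0 i)
      have hωd : ∀ i, ω i ^ d i = 1 := by
        intro i
        rw [hω]; dsimp only
        rw [← zpow_natCast (ζ i ^ A i) (d i), ← zpow_mul, mul_comm, zpow_mul,
          zpow_natCast, hζd i, one_zpow]
      have hωq : ∀ i, ω i ^ q i = ζ i := by
        intro i
        rw [hω]; dsimp only
        rw [← zpow_natCast (ζ i ^ A i) (q i), ← zpow_mul, mul_comm (A i) (q i), hbez i,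
          zpow_sub₀ (hζ0 i), zpow_one, zpow_mul, zpow_natCast, hζd i, one_zpow, div_one]
      have hprodne : Finset.univ.prod ω ≠ 0 := Finset.prod_ne_zero_iff.mpr fun j _ => hω0 j
      refine ⟨t₀ * Finset.univ.prod ω, mul_ne_zero ht₀0 hprodne, fun i => ?_⟩
      have hprod : (Finset.univ.prod ω) ^ q i = ζ i := by
        rw [← Finset.prod_pow, Finset.prod_eq_single i]
        · exact hωq i
        · intro j _ hji
          obtain ⟨c, hc⟩ := hdvd j i (Ne.symm hji)
          rw [hc, pow_mul, hωd j, one_pow]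
        · intro hi; exact absurd (Finset.mem_univ i) hi
      calc y.1 i = ζ i * z i := hζz i
        _ = ζ i * (t₀ ^ q i * x.1 i) := rfl
        _ = (t₀ * Finset.univ.prod ω) ^ q i * x.1 i := by rw [mul_pow, hprod]; ring
    · push_neg at hall
      obtain ⟨i₀, hi₀⟩ := hall
      have hd0 : d i₀ = 0 := Nat.le_zero.mp hi₀
      have huniq : ∀ j : Fin (n+1), j = i₀ := by
        intro j
        by_contra hj
        have hq0 := Finset.gcd_eq_zero_iff.mp ((hd i₀) ▸ hd0) j
          (Finset.mem_erase.mpr ⟨hj, Finset.mem_univ j⟩)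
        exact (hq j).ne' hq0
      have hx0 : x.1 i₀ ≠ 0 := by
        intro h0
        apply x.2
        funext j
        show x.1 j = 0
        rw [huniq j, h0]
      have hy0 : y.1 i₀ ≠ 0 := by
        intro h0
        apply y.2
        funext j
        show y.1 j = 0
        rw [huniq j, h0]
      obtain ⟨t, ht⟩ := IsAlgClosed.exists_pow_nat_eq (k := ℂ) (y.1 i₀ / x.1 i₀) (hq i₀)
      have ht0 : t ≠ 0 := by
        intro h0
        rw [h0, zero_pow (hq i₀).ne'] at ht
        exact (div_ne_zero hy0 hx0) ht.symm
      refine ⟨t, ht0, fun i => ?_⟩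
      rw [huniq i, ht, div_mul_cancel₀ _ hx0]
  have hsurj : Function.Surjective F := by
    intro b
    induction b using Quot.ind with | _ y => ?_
    by_cases hall : ∀ i, 0 < d i
    · choose x hx using fun i => IsAlgClosed.exists_pow_nat_eq (k := ℂ) (y.1 i) (hall i)
      have hx0 : x ≠ 0 := by
        intro h0
        apply y.2
        funext j
        show y.1 j = 0
        rw [← hx j, congrFun h0 j]
        exact zero_pow (hall j).ne'
      refine ⟨Quot.mk _ ⟨x, hx0⟩, ?_⟩
      show Quot.mk _ (f ⟨x, hx0⟩) = Quot.mk _ y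
      congr 1
      exact Subtype.ext (funext fun i => hx i)
    · push_neg at hall
      obtain ⟨i₀, hi₀⟩ := hall
      have hd0 : d i₀ = 0 := Nat.le_zero.mp hi₀
      have huniq : ∀ j : Fin (n+1), j = i₀ := by
        intro j
        by_contra hj
        have hq0 := Finset.gcd_eq_zero_iff.mp ((hd i₀) ▸ hd0) j
          (Finset.mem_erase.mpr ⟨hj, Finset.mem_univ j⟩)
        exact (hq j).ne' hq0
      have hy0 : y.1 i₀ ≠ 0 := by
        intro h0
        apply y.2
        funext j
        show y.1 j = 0
        rw [huniq j, h0]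
      obtain ⟨c, hc⟩ := IsAlgClosed.exists_pow_nat_eq (k := ℂ) (y.1 i₀) (hppos i₀)
      have hc0 : c ≠ 0 := by
        intro h0
        rw [h0, zero_pow (hppos i₀).ne'] at hc
        exact hy0 hc.symm
      have hcne : (fun _ : Fin (n+1) => c) ≠ (0 : Fin (n+1) → ℂ) :=
        fun h0 => hc0 (congrFun h0 i₀)
      refine ⟨Quot.mk _ ⟨fun _ => c, hcne⟩, ?_⟩
      show Quot.mk _ (f ⟨fun _ => c, hcne⟩) = Quot.mk _ y
      apply Quot.sound
      refine ⟨c, hc0, fun i => ?_⟩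
      show y.1 i = c ^ p i * c ^ d i
      rw [huniq i, hd0, pow_zero, mul_one, hc]
  exact ⟨fun i => ⟨hediv i, hppos i⟩, F, ⟨hinj, hsurj⟩, fun x h => rfl⟩

/-- with `d i = gcd` of all weights except `q i`,
`e i = ∏_{j ≠ i} d j` and `p i = q i / e i`, the `p i` are positive integers
(`e i ∣ q i` and `q i / e i > 0`) and `[x₀:…:x_n] ↦ [x₀^{d₀}:…:x_n^{d_n}]`
induces a well-defined bijection `ℙⁿ(q) → ℙⁿ(p)`. -/
theorem stmt_4 (n : ℕ) (q : Fin (n + 1) → ℕ) (hq : ∀ i, 0 < q i)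
    (hgcd : Finset.univ.gcd q = 1) :
    let d : Fin (n + 1) → ℕ := fun i => (Finset.univ.erase i).gcd q
    let e : Fin (n + 1) → ℕ := fun i => (Finset.univ.erase i).prod d
    let p : Fin (n + 1) → ℕ := fun i => q i / e i
    (∀ i, e i ∣ q i ∧ 0 < p i) ∧
    ∃ F : Quot (wprojRel (n + 1) q) → Quot (wprojRel (n + 1) p),
      Function.Bijective F ∧
      ∀ (x : {v : Fin (n + 1) → ℂ // v ≠ 0})
        (h : (fun i => x.1 i ^ d i) ≠ (0 : Fin (n + 1) → ℂ)),
        F (Quot.mk _ x) = Quot.mk _ ⟨fun i => x.1 i ^ d i, h⟩ := by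
  intro d e p
  exact stmt4_aux n q hq hgcd d e p (fun i => rfl) (fun i => rfl) (fun i => rfl)
end

section
/- Let p, q be positive integers, e = gcd(p,q), p = p₁e, q = q₁e. The rational function Δ(t) = (t−1)(t^{pq/e}−1)^e / ((t^p−1)(t^q−1)) is a polynomial in t of degree (p−1)(q−1). -/
open Polynomial in
/-- with `e = gcd(p,q)`, the rational function
`(t−1)(t^{pq/e}−1)^e / ((t^p−1)(t^q−1))` is a polynomial of degree `(p−1)(q−1)`. -/
theorem stmt_9 (p q : ℕ) (hp : 0 < p) (hq : 0 < q) :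
    ∃ P : Polynomial ℂ,
      (X ^ p - 1) * (X ^ q - 1) * P =
        (X - 1) * (X ^ (p * q / Nat.gcd p q) - 1) ^ (Nat.gcd p q) ∧
      P.natDegree = (p - 1) * (q - 1) := by
  set e := Nat.gcd p q with he_def
  set m := p * q / e with hm_def
  have he : 0 < e := Nat.gcd_pos_of_pos_left q hp
  have hedvd : e ∣ p * q := (Nat.gcd_dvd_left p q).mul_right q
  have hme : m * e = p * q := Nat.div_mul_cancel hedvd
  have hpm : p ∣ m := ⟨q / e, by rw [hm_def, Nat.mul_div_assoc p (Nat.gcd_dvd_right p q)]⟩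
  have hqm : q ∣ m := ⟨p / e, by
    rw [hm_def, Nat.mul_comm p q, Nat.mul_div_assoc q (Nat.gcd_dvd_left p q)]⟩
  have hm : 0 < m := Nat.pos_of_ne_zero (fun h => by
    have := hme; rw [h, zero_mul] at this
    exact (Nat.mul_pos hp hq).ne' this.symm)
  -- exponent functions
  set εp : ℕ → ℕ := fun d => if d ∣ p then 1 else 0 with hεp
  set εq : ℕ → ℕ := fun d => if d ∣ q then 1 else 0 with hεq
  set ε1 : ℕ → ℕ := fun d => if d = 1 then 1 else 0 with hε1
  set c : ℕ → ℕ := fun d => ε1 d + e - (εp d + εq d) with hc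
  have heq : (X ^ p - 1 : ℂ[X]) * (X ^ q - 1) * (∏ d ∈ m.divisors, (cyclotomic d ℂ) ^ (c d)) =
      (X - 1) * (X ^ m - 1) ^ e := by
    -- key pointwise exponent identity
      have key : ∀ d ∈ m.divisors, εp d + εq d + c d = ε1 d + e := by
        intro d hd
        have hdm : d ∣ m := (Nat.mem_divisors.mp hd).1
        have hd0 : d ≠ 0 := by
          rintro rfl; exact hm.ne' (Nat.zero_dvd.mp hdm)
        have hle : εp d + εq d ≤ ε1 d + e := by
          rcases eq_or_ne d 1 with rfl | h1
          · have e1 : ε1 1 = 1 := by simp [hε1]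
            have e2 : εp 1 ≤ 1 := by simp [hεp]
            have e3 : εq 1 ≤ 1 := by simp [hεq]
            omega
          · have e1 : ε1 d = 0 := by simp [hε1, h1]
            by_cases hdp : d ∣ p
            · by_cases hdq : d ∣ q
              · have hde : d ∣ e := Nat.dvd_gcd hdp hdq
                have hd2 : 2 ≤ d := by omega
                have h2e : 2 ≤ e := le_trans hd2 (Nat.le_of_dvd he hde)
                have e2 : εp d ≤ 1 := by simp [hεp]; split <;> omega
                have e3 : εq d ≤ 1 := by simp [hεq]; split <;> omega
                omega
              · have e2 : εp d ≤ 1 := by simp [hεp]; split <;> omega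
                have e3 : εq d = 0 := by simp [hεq, hdq]
                omega
            · have e2 : εp d = 0 := by simp [hεp, hdp]
              have e3 : εq d ≤ 1 := by simp [hεq]; split <;> omega
              omega
        simp only [hc]
        omega
      have hXp : (X ^ p - 1 : ℂ[X]) = ∏ d ∈ m.divisors, (cyclotomic d ℂ) ^ (εp d) := by
        rw [← prod_cyclotomic_eq_X_pow_sub_one hp ℂ]
        rw [← Finset.prod_subset (Nat.divisors_subset_of_dvd hm.ne' hpm)]
        · exact Finset.prod_congr rfl fun d hd => by
            simp [hεp, (Nat.mem_divisors.mp hd).1]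
        · intro d hd hnd
          have : ¬ d ∣ p := fun h => hnd (Nat.mem_divisors.mpr ⟨h, hp.ne'⟩)
          simp [hεp, this]
      have hXq : (X ^ q - 1 : ℂ[X]) = ∏ d ∈ m.divisors, (cyclotomic d ℂ) ^ (εq d) := by
        rw [← prod_cyclotomic_eq_X_pow_sub_one hq ℂ]
        rw [← Finset.prod_subset (Nat.divisors_subset_of_dvd hm.ne' hqm)]
        · exact Finset.prod_congr rfl fun d hd => by
            simp [hεq, (Nat.mem_divisors.mp hd).1]
        · intro d hd hnd
          have : ¬ d ∣ q := fun h => hnd (Nat.mem_divisors.mpr ⟨h, hq.ne'⟩)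
          simp [hεq, this]
      have hX1 : (X - 1 : ℂ[X]) = ∏ d ∈ m.divisors, (cyclotomic d ℂ) ^ (ε1 d) := by
        rw [← Finset.prod_subset (show {1} ⊆ m.divisors by
          simp [Nat.one_mem_divisors, hm.ne'])]
        · simp [hε1, cyclotomic_one]
        · intro d hd hnd
          have : d ≠ 1 := by simpa using hnd
          simp [hε1, this]
      have hXm : ((X ^ m - 1 : ℂ[X])) ^ e = ∏ d ∈ m.divisors, (cyclotomic d ℂ) ^ e := by
        rw [← prod_cyclotomic_eq_X_pow_sub_one hm ℂ, ← Finset.prod_pow]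
      rw [hXp, hXq, hX1, hXm, ← Finset.prod_mul_distrib, ← Finset.prod_mul_distrib,
        ← Finset.prod_mul_distrib]
      refine Finset.prod_congr rfl fun d hd => ?_
      rw [← pow_add, ← pow_add, ← pow_add, key d hd]
  refine ⟨∏ d ∈ m.divisors, (cyclotomic d ℂ) ^ (c d), heq, ?_⟩
  have hPne : (∏ d ∈ m.divisors, (cyclotomic d ℂ) ^ (c d)) ≠ 0 :=
    Finset.prod_ne_zero_iff.mpr fun d _ => pow_ne_zero _ (cyclotomic_ne_zero d ℂ)
  have hpne : (X ^ p - 1 : ℂ[X]) ≠ 0 := by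
    rw [← C_1]; exact (monic_X_pow_sub_C 1 hp.ne').ne_zero
  have hqne : (X ^ q - 1 : ℂ[X]) ≠ 0 := by
    rw [← C_1]; exact (monic_X_pow_sub_C 1 hq.ne').ne_zero
  have hdeg := congrArg natDegree heq
  have h1ne : (X - 1 : ℂ[X]) ≠ 0 := by rw [← C_1]; exact X_sub_C_ne_zero 1
  have hmne : (X ^ m - 1 : ℂ[X]) ≠ 0 := by
    rw [← C_1]; exact (monic_X_pow_sub_C (1:ℂ) hm.ne').ne_zero
  rw [natDegree_mul (mul_ne_zero hpne hqne) hPne, natDegree_mul hpne hqne,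
    natDegree_mul h1ne (pow_ne_zero _ hmne), natDegree_pow,
    show (1:ℂ[X]) = C 1 from (C_1).symm, natDegree_X_pow_sub_C, natDegree_X_pow_sub_C,
    natDegree_X_sub_C, natDegree_X_pow_sub_C] at hdeg
  have hpq : e * m = p * q := by rw [mul_comm]; exact hme
  obtain ⟨a, rfl⟩ := Nat.exists_eq_add_of_lt hp
  obtain ⟨b, rfl⟩ := Nat.exists_eq_add_of_lt hq
  have hexp : (0 + a + 1) * (0 + b + 1) = a * b + a + b + 1 := by ring
  simp only [Nat.add_sub_cancel]
  have haux : (0 + a) * (0 + b) = a * b := by ring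
  omega
end

section
/- Let G be a finite group of diagonal linear automorphisms of ℂⁿ (each g ∈ G acts by (x₁,…,x_n) ↦ (χ₁(g)x₁,…,χ_n(g)x_n) for characters χᵢ : G → ℂ*). Let f ∈ ℂ[x₁,…,x_n] be a squarefree (reduced) polynomial. Then the following are equivalent: (1) for all P ∈ ℂⁿ and g ∈ G, f(P) = 0 implies f(g·P) = 0; (2) there is a character χ : G → ℂ* such that f(g·x) = χ(g)f(x) for all g ∈ G; (3) there exists k ≥ 1 such that f^k is G-invariant, i.e. f^k(g·x) = f^k(x) for all g ∈ G. -/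
/-!
Write `g · f` for the polynomial `x ↦ f(g·x)`. If the zero set of `f` is `G`-stable, the
Nullstellensatz puts `g · f` in the radical of `(f)`, which is `(f)` since `f` is squarefree; if
`f^k` is `G`-invariant, then `f ∣ (g · f)^k` and again `f ∣ g · f`. Applying this to `g⁻¹` as well
shows that `f` and `g · f` are associated, so `g · f = c(g) f` for a nonzero constant `c(g)`, and
comparing `(gh) · f` with `g · (h · f)` makes `c` a character. Conversely `c(g)^|G| = 1`, so
`f^|G|` is invariant.
-/

namespace MvPolynomial

variable {σ R : Type*}

section CommSemiring

variable [CommSemiring R]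

noncomputable def scale (d : σ → R) : MvPolynomial σ R →ₐ[R] MvPolynomial σ R :=
  bind₁ fun i => C (d i) * X i

theorem eval_scale (d x : σ → R) (p : MvPolynomial σ R) :
    eval x (scale d p) = eval (d * x) p := by
  simp only [scale, ← aeval_eq_eval, aeval_bind₁]
  congr 2
  funext i
  simp

theorem scale_scale (d e : σ → R) (p : MvPolynomial σ R) :
    scale d (scale e p) = scale (d * e) p := by
  rw [scale, scale, bind₁_bind₁, scale]
  congr 2
  funext i
  simp only [map_mul, bind₁_C_right, bind₁_X_right, Pi.mul_apply]
  ring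

theorem scale_one (p : MvPolynomial σ R) : scale (1 : σ → R) p = p := by
  simp only [scale, Pi.one_apply, map_one, one_mul, bind₁_X_left, AlgHom.id_apply]

theorem scale_C (d : σ → R) (r : R) : scale d (C r) = C r :=
  (scale d).commutes r

end CommSemiring

section IsDomain

variable [CommRing R] [IsDomain R] {G : Type*} [Group G]

theorem exists_unit_scale_eq_C_mul (d : G →* (σ → R)) {f : MvPolynomial σ R}
    (hdvd : ∀ g, f ∣ scale (d g) f) (g : G) : ∃ r : Rˣ, scale (d g) f = C (r : R) * f := by
  obtain ⟨h, hh⟩ := hdvd g⁻¹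
  have hf : f = scale (d g) f * scale (d g) h := by
    rw [← map_mul, ← hh, scale_scale, ← map_mul, mul_inv_cancel, map_one, scale_one]
  obtain ⟨u, hu⟩ := associated_of_dvd_dvd (hdvd g) ⟨_, hf⟩
  obtain ⟨r, hr, hur⟩ := (isUnit_iff_eq_C_of_isReduced (P := (u : MvPolynomial σ R))).1 u.isUnit
  exact ⟨hr.unit, by rw [← hu, hur, mul_comm, IsUnit.unit_spec]⟩

theorem exists_monoidHom_scale_eq_C_mul (d : G →* (σ → R)) {f : MvPolynomial σ R} (hf : f ≠ 0)
    (hdvd : ∀ g, f ∣ scale (d g) f) : ∃ c : G →* Rˣ, ∀ g, scale (d g) f = C (c g : R) * f := by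
  choose c hc using exists_unit_scale_eq_C_mul d hdvd
  refine ⟨MonoidHom.mk' c fun g h => ?_, hc⟩
  have : C (c (g * h) : R) * f = C (c g * c h : R) * f := by
    rw [← hc, map_mul, ← scale_scale, hc, map_mul, scale_C, hc, ← mul_assoc, ← C_mul,
      mul_comm (c h : R)]
  exact Units.val_injective (C_injective σ R (mul_right_cancel₀ hf this))

end IsDomain

theorem _root_.Squarefree.dvd_of_eval_eq_zero_imp {K : Type*} [Field K] [IsAlgClosed K] [Finite σ]
    {f p : MvPolynomial σ K} (hf : Squarefree f) (h : ∀ x, eval x f = 0 → eval x p = 0) :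
    f ∣ p := by
  have hp : p ∈ vanishingIdeal K (zeroLocus K (Ideal.span {f})) := fun x hx =>
    h x (hx f (Ideal.mem_span_singleton_self f))
  rw [vanishingIdeal_zeroLocus_eq_radical] at hp
  obtain ⟨m, hm⟩ := hp
  exact hf.isRadical m p (Ideal.mem_span_singleton.1 hm)

end MvPolynomial

open MvPolynomial in
/-- for a finite group `G` acting diagonally on `ℂⁿ` through
characters `χᵢ : G → ℂ*` and `f` a squarefree polynomial, the following are
equivalent: (1) the zero set of `f` is `G`-invariant; (2) there is a character
`χ : G → ℂ*` with `f(g·x) = χ(g) f(x)`; (3) some power `f^k` (`k ≥ 1`) is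
`G`-invariant. -/
theorem stmt_14 (n : ℕ) (G : Type) [Group G] [Finite G]
    (χ : Fin n → (G →* ℂˣ)) (f : MvPolynomial (Fin n) ℂ) (hf : Squarefree f)
    (act : G → (Fin n → ℂ) → (Fin n → ℂ))
    (hact : ∀ g x, act g x = fun i => (χ i g : ℂ) * x i) :
    ((∀ (P : Fin n → ℂ) (g : G), eval P f = 0 → eval (act g P) f = 0) ↔
      (∃ c : G →* ℂˣ, ∀ (g : G) (x : Fin n → ℂ),
        eval (act g x) f = (c g : ℂ) * eval x f)) ∧
    ((∃ c : G →* ℂˣ, ∀ (g : G) (x : Fin n → ℂ),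
        eval (act g x) f = (c g : ℂ) * eval x f) ↔
      (∃ k : ℕ, 1 ≤ k ∧ ∀ (g : G) (x : Fin n → ℂ),
        eval (act g x) f ^ k = eval x f ^ k)) := by
  let d : G →* (Fin n → ℂ) := MonoidHom.pi fun i => (Units.coeHom ℂ).comp (χ i)
  have hscale : ∀ g x, eval (act g x) f = eval x (scale (d g) f) := fun g x => by
    rw [eval_scale, hact]
    rfl
  simp only [hscale]
  have hchar (hdvd : ∀ g, f ∣ scale (d g) f) :
      ∃ c : G →* ℂˣ, ∀ g x, eval x (scale (d g) f) = c g * eval x f := by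
    obtain ⟨c, hc⟩ := exists_monoidHom_scale_eq_C_mul d hf.ne_zero hdvd
    exact ⟨c, fun g x => by rw [hc, eval_mul, eval_C]⟩
  refine ⟨⟨fun hzero => hchar fun g => hf.dvd_of_eval_eq_zero_imp (hzero · g), ?_⟩, ?_, ?_⟩
  · rintro ⟨c, hc⟩ P g hP
    rw [hc, hP, mul_zero]
  · rintro ⟨c, hc⟩
    refine ⟨Nat.card G, Nat.card_pos, fun g x => ?_⟩
    rw [hc, mul_pow, ← Units.val_pow_eq_pow_val, ← map_pow, pow_card_eq_one', map_one,
      Units.val_one, one_mul]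
  · rintro ⟨k, hk, hpow⟩
    refine hchar fun g => hf.isRadical k _ ?_
    rw [show scale (d g) f ^ k = f ^ k from funext fun x => by simp only [map_pow, hpow]]
    exact dvd_pow_self f (by omega)
end

section
/- The polynomial f = (x² + y)(x² − y)³ ∈ ℂ[x,y] has the property that its zero set is invariant under the action of μ₂ = {±1} on ℂ² given by (−1)·(x,y) = (−x,−y), but there is no integer k ≥ 1 such that f^k is invariant under this action (i.e. f(−x,−y)^k = f(x,y)^k for all (x,y) fails for every k ≥ 1). -/
/-! On the zero set of `(x² + y)(x² − y)³` the substitution `(x, y) ↦ (−x, −y)` just swaps the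
two factors `x² ± y`, so the zero set is preserved. But `f(−x, −y) = (x² − y)(x² + y)³`, so where
`f` is nonzero the ratio `f(−x, −y) / f(x, y) = ((x² + y) / (x² − y))²` equals `4` at `(1, 3)`;
as this is not a root of unity, no power of `f` is invariant. -/

theorem mul_pow_eq_zero_comm {M₀ : Type*} [MonoidWithZero M₀] [NoZeroDivisors M₀] {a b : M₀}
    {n : ℕ} (hn : n ≠ 0) : a * b ^ n = 0 ↔ b * a ^ n = 0 := by
  simp only [mul_eq_zero, pow_eq_zero_iff hn, or_comm]

theorem norm_eq_norm_of_pow_eq_pow {K : Type*} [NormedDivisionRing K] {a b : K} {n : ℕ}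
    (hn : n ≠ 0) (h : a ^ n = b ^ n) : ‖a‖ = ‖b‖ := by
  rw [← pow_left_inj₀ (norm_nonneg a) (norm_nonneg b) hn, ← norm_pow, ← norm_pow, h]

/-- the zero set of `f = (x²+y)(x²−y)³` is invariant under
`(x,y) ↦ (−x,−y)`, but no power `f^k` (`k ≥ 1`) is invariant under this action. -/
theorem stmt_15 :
    let f : ℂ → ℂ → ℂ := fun x y => (x ^ 2 + y) * (x ^ 2 - y) ^ 3
    (∀ x y : ℂ, f x y = 0 → f (-x) (-y) = 0) ∧
    (∀ k : ℕ, 1 ≤ k → ¬ ∀ x y : ℂ, f (-x) (-y) ^ k = f x y ^ k) := by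
  intro f
  have f_neg : ∀ x y, f (-x) (-y) = (x ^ 2 - y) * (x ^ 2 + y) ^ 3 := fun x y => by
    simp only [f]; ring
  refine ⟨fun x y h => ?_, fun k hk h => ?_⟩
  · rw [f_neg]
    exact (mul_pow_eq_zero_comm three_ne_zero).1 h
  · have norm_ne : ‖f (-1) (-3)‖ ≠ ‖f 1 3‖ := by norm_num [f]
    exact norm_ne (norm_eq_norm_of_pow_eq_pow (by omega) (h 1 3))
end
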